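/- Let μ_i: ℕ → ℝ be positive non-increasing sequences for i ∈ [K]. Let π^max be the greedy policy pulling the arm with largest next reward. For any times t₁ ≤ t₂ and any policy π, the sum of rewards collected by π^max on steps t₁,...,t₂ when run from the start is at most the sum of rewards collected on steps t₁,...,t₂ by following π^max after any arbitrary prefix of t₁−1 pulls. Equivalently: the sum of the (t₁)-th through (t₂)-th largest elements of the multiset {μ_i(n) : i∈[K], n∈ℕ} is the minimum over all allocation-consistent continuations. -/
import Mathlib


open Finset

/-- number of pulls of arm `i` by policy `π` strictly before time `t` -/
def pullCount {K : ℕ} (π : ℕ → Fin K) (i : Fin K) (t : ℕ) : ℕ :=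
  ((Finset.range t).filter (fun s => π s = i)).card

/-- reward collected by policy `π` at step `t` -/
def stepReward {K : ℕ} (μ : Fin K → ℕ → ℝ) (π : ℕ → Fin K) (t : ℕ) : ℝ :=
  μ (π t) (pullCount π (π t) t + 1)

/-- `π` acts greedily at time `t` -/
def GreedyAt {K : ℕ} (μ : Fin K → ℕ → ℝ) (π : ℕ → Fin K) (t : ℕ) : Prop :=
  ∀ i : Fin K, μ i (pullCount π i t + 1) ≤ μ (π t) (pullCount π (π t) t + 1)

lemma pullCount_succ {K : ℕ} (π : ℕ → Fin K) (i : Fin K) (t : ℕ) :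
    pullCount π i (t + 1) = pullCount π i t + (if π t = i then 1 else 0) := by
  unfold pullCount
  rw [Finset.range_add_one, Finset.filter_insert]
  split
  · rw [Finset.card_insert_of_notMem (by simp)]
  · simp

lemma sum_pullCount {K : ℕ} (π : ℕ → Fin K) (t : ℕ) :
    ∑ i : Fin K, pullCount π i t = t := by
  induction t with
  | zero => simp [pullCount]
  | succ t ih =>
    simp only [pullCount_succ, Finset.sum_add_distrib, ih]
    congr 1
    simp

lemma exists_pull_step {K : ℕ} (π : ℕ → Fin K) (i : Fin K) {c : ℕ} :
    ∀ t, c < pullCount π i t → ∃ s, s < t ∧ π s = i ∧ pullCount π i s = c := by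
  intro t
  induction t with
  | zero => intro h; simp [pullCount] at h
  | succ t ih =>
    intro h
    by_cases h' : c < pullCount π i t
    · obtain ⟨s, hs, h1, h2⟩ := ih h'
      exact ⟨s, hs.trans (Nat.lt_succ_self t), h1, h2⟩
    · push_neg at h'
      rw [pullCount_succ] at h
      split at h
      · exact ⟨t, Nat.lt_succ_self t, by assumption, le_antisymm h' (by omega)⟩
      · omega

lemma greedy_stepReward_antitone {K : ℕ} (μ : Fin K → ℕ → ℝ)
    (hanti : ∀ i, Antitone (μ i))
    (πg : ℕ → Fin K) (hg : ∀ t, GreedyAt μ πg t) :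
    ∀ s t, s ≤ t → stepReward μ πg t ≤ stepReward μ πg s := by
  have dec : ∀ t, stepReward μ πg (t + 1) ≤ stepReward μ πg t := by
    intro t
    unfold stepReward
    rw [pullCount_succ]
    by_cases h : πg t = πg (t + 1)
    · rw [if_pos h, ← h]
      exact hanti (πg t) (by omega)
    · rw [if_neg h, add_zero]
      exact hg t (πg (t + 1))
  intro s t hst
  induction hst with
  | refl => exact le_rfl
  | step h ih => exact (dec _).trans ih

/-- The rewards collected by the greedy-from-the-start policy on steps `t₁,…,t₂-1`
are at most those collected on the same steps by a policy that follows an arbitrary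
prefix of pulls up to time `t₁` and is greedy from time `t₁` onward: the sum of the
`t₁`-th through `t₂`-th largest elements of the reward multiset is the minimum over
all such greedy continuations. -/
theorem greedy_tail_sum_minimal {K : ℕ}
    (μ : Fin K → ℕ → ℝ)
    (hpos : ∀ i n, 0 < μ i n)
    (hanti : ∀ i, Antitone (μ i))
    (t₁ t₂ : ℕ) (ht : t₁ ≤ t₂)
    (πg : ℕ → Fin K) (hg : ∀ t, GreedyAt μ πg t)
    (π : ℕ → Fin K) (hπ : ∀ t, t₁ ≤ t → GreedyAt μ π t) :
    ∑ t ∈ Finset.Ico t₁ t₂, stepReward μ πg t ≤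
      ∑ t ∈ Finset.Ico t₁ t₂, stepReward μ π t := by
  apply Finset.sum_le_sum
  intro t htmem
  have ht₁ : t₁ ≤ t := (Finset.mem_Ico.mp htmem).1
  by_cases hx : ∃ i, pullCount π i t < pullCount πg i t
  · obtain ⟨i, hi⟩ := hx
    obtain ⟨s, hs, hsi, hsc⟩ := exists_pull_step πg i t hi
    have h1 : stepReward μ πg s = μ i (pullCount π i t + 1) := by
      unfold stepReward; rw [hsi, hsc]
    calc stepReward μ πg t ≤ stepReward μ πg s :=
          greedy_stepReward_antitone μ hanti πg hg s t hs.le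
      _ = μ i (pullCount π i t + 1) := h1
      _ ≤ _ := hπ t ht₁ i
  · push_neg at hx
    have heq : pullCount πg (πg t) t = pullCount π (πg t) t := by
      have hsum : ∑ i : Fin K, pullCount πg i t = ∑ i : Fin K, pullCount π i t := by
        rw [sum_pullCount, sum_pullCount]
      exact (Finset.sum_eq_sum_iff_of_le (fun i _ => hx i)).mp hsum (πg t)
        (Finset.mem_univ _)
    calc stepReward μ πg t = μ (πg t) (pullCount π (πg t) t + 1) := by
          unfold stepReward; rw [heq]
      _ ≤ _ := hπ t ht₁ (πg t)
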